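/- Let 1≤q≤p≤∞, f∈ℓ^q(ℤ), and u_f(t,n) = (G(t,·)*f)(n). Then there is C>0 with ‖u_f(t,·)‖_p ≤ C t^{-(1/2)(1/q - 1/p)} ‖f‖_q for all t>0. -/

import Mathlib

open MeasureTheory
open scoped ENNReal

noncomputable def heatKernel (t : ℝ) (n : ℤ) : ℝ :=
  Real.exp (-2 * t) *
    ∑' m : ℕ, t ^ (2 * m + n.natAbs) /
      ((m.factorial : ℝ) * Real.Gamma ((m : ℝ) + (n.natAbs : ℝ) + 1))

noncomputable def Pois (t : ℝ) (m : ℕ) : ℝ := Real.exp (-t) * (t ^ m / m.factorial)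





lemma Pois_nonneg {t : ℝ} (ht : 0 ≤ t) (m : ℕ) : 0 ≤ Pois t m := by
  unfold Pois; positivity

lemma tsum_pow_div_factorial (t : ℝ) : ∑' m : ℕ, t ^ m / m.factorial = Real.exp t := by
  rw [Real.exp_eq_exp_ℝ, NormedSpace.exp_eq_tsum_div]

lemma Pois_summable (t : ℝ) : Summable (Pois t) := by
  unfold Pois
  exact (Real.summable_pow_div_factorial t).mul_left _

lemma Pois_tsum (t : ℝ) : ∑' m, Pois t m = 1 := by
  unfold Pois
  rw [tsum_mul_left, tsum_pow_div_factorial, ← Real.exp_add]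
  simp

lemma Pois_le_one {t : ℝ} (ht : 0 ≤ t) (m : ℕ) : Pois t m ≤ 1 := by
  have h := Summable.le_tsum (Pois_summable t) m (fun j _ => Pois_nonneg ht j)
  rw [Pois_tsum t] at h
  exact h

lemma heatKernel_eq (t : ℝ) (n : ℤ) :
    heatKernel t n = ∑' m : ℕ, Pois t m * Pois t (m + n.natAbs) := by
  unfold heatKernel
  rw [← tsum_mul_left]
  congr 1
  ext m
  have hg : Real.Gamma ((m : ℝ) + (n.natAbs : ℝ) + 1) = ((m + n.natAbs).factorial : ℝ) := by
    rw [show ((m : ℝ) + (n.natAbs : ℝ) + 1) = ((m + n.natAbs : ℕ) : ℝ) + 1 by push_cast; ring,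
      Real.Gamma_nat_eq_factorial]
  rw [hg]
  unfold Pois
  rw [show Real.exp (-2 * t) = Real.exp (-t) * Real.exp (-t) by
    rw [← Real.exp_add]; ring_nf]
  rw [pow_add, pow_add, two_mul, pow_add]
  ring

def poisEquiv : ℤ × ℕ ≃ ℕ × ℕ where
  toFun p := (p.2 + (-p.1).toNat, p.2 + p.1.toNat)
  invFun q := ((q.2 : ℤ) - (q.1 : ℤ), min q.1 q.2)
  left_inv p := by obtain ⟨n, m⟩ := p; simp only [Prod.mk.injEq]; constructor <;> omega
  right_inv q := by obtain ⟨a, b⟩ := q; simp only [Prod.mk.injEq]; constructor <;> omega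

lemma Pois_mul_summable {t : ℝ} (ht : 0 ≤ t) (a : ℕ) :
    Summable (fun m => Pois t m * Pois t (m + a)) := by
  refine Summable.of_nonneg_of_le
    (fun m => mul_nonneg (Pois_nonneg ht m) (Pois_nonneg ht _))
    (fun m => ?_) (Pois_summable t)
  calc Pois t m * Pois t (m + a) ≤ Pois t m * 1 :=
        mul_le_mul_of_nonneg_left (Pois_le_one ht _) (Pois_nonneg ht m)
    _ = Pois t m := mul_one _

lemma heatKernel_nonneg {t : ℝ} (ht : 0 ≤ t) (n : ℤ) : 0 ≤ heatKernel t n := by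
  rw [heatKernel_eq]
  exact tsum_nonneg fun m => mul_nonneg (Pois_nonneg ht m) (Pois_nonneg ht _)

lemma ofReal_heatKernel {t : ℝ} (ht : 0 ≤ t) (n : ℤ) :
    ENNReal.ofReal (heatKernel t n)
      = ∑' m : ℕ, ENNReal.ofReal (Pois t m) * ENNReal.ofReal (Pois t (m + n.natAbs)) := by
  rw [heatKernel_eq,
    ENNReal.ofReal_tsum_of_nonneg
      (fun m => mul_nonneg (Pois_nonneg ht m) (Pois_nonneg ht _))
      (Pois_mul_summable ht n.natAbs)]
  exact tsum_congr fun m => ENNReal.ofReal_mul (Pois_nonneg ht m)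

lemma ofReal_Pois_tsum {t : ℝ} (ht : 0 ≤ t) :
    ∑' m : ℕ, ENNReal.ofReal (Pois t m) = 1 := by
  rw [← ENNReal.ofReal_tsum_of_nonneg (Pois_nonneg ht) (Pois_summable t), Pois_tsum,
    ENNReal.ofReal_one]

lemma tsum_ofReal_heatKernel {t : ℝ} (ht : 0 ≤ t) :
    ∑' n : ℤ, ENNReal.ofReal (heatKernel t n) = 1 := by
  have key : ∀ p : ℤ × ℕ,
      ENNReal.ofReal (Pois t p.2) * ENNReal.ofReal (Pois t (p.2 + p.1.natAbs))
        = ENNReal.ofReal (Pois t (poisEquiv p).1) * ENNReal.ofReal (Pois t (poisEquiv p).2) := by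
    rintro ⟨n, m⟩
    simp only [poisEquiv, Equiv.coe_fn_mk]
    rcases le_or_gt 0 n with h | h
    · rw [show (-n).toNat = 0 by omega, show n.toNat = n.natAbs by omega, add_zero]
    · rw [show n.toNat = 0 by omega, show (-n).toNat = n.natAbs by omega, add_zero, mul_comm]
  calc ∑' n : ℤ, ENNReal.ofReal (heatKernel t n)
      = ∑' (n : ℤ) (m : ℕ), ENNReal.ofReal (Pois t m) * ENNReal.ofReal (Pois t (m + n.natAbs)) := by
        exact tsum_congr fun n => ofReal_heatKernel ht n
    _ = ∑' p : ℤ × ℕ, ENNReal.ofReal (Pois t p.2) * ENNReal.ofReal (Pois t (p.2 + p.1.natAbs)) := by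
        rw [ENNReal.tsum_prod']
    _ = ∑' p : ℤ × ℕ, ENNReal.ofReal (Pois t (poisEquiv p).1) * ENNReal.ofReal (Pois t (poisEquiv p).2) := by
        exact tsum_congr key
    _ = ∑' q : ℕ × ℕ, ENNReal.ofReal (Pois t q.1) * ENNReal.ofReal (Pois t q.2) := by
        exact poisEquiv.tsum_eq (fun q : ℕ × ℕ => ENNReal.ofReal (Pois t q.1) * ENNReal.ofReal (Pois t q.2))
    _ = (∑' a : ℕ, ENNReal.ofReal (Pois t a)) * (∑' b : ℕ, ENNReal.ofReal (Pois t b)) := by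
        rw [ENNReal.tsum_prod']
        simp_rw [ENNReal.tsum_mul_left, ENNReal.tsum_mul_right]
    _ = 1 := by rw [ofReal_Pois_tsum ht, one_mul]

lemma fact_up (m : ℕ) (R : ℝ) :
    ∀ i : ℕ, ((m : ℝ) + i ≤ R) → (((m + i).factorial : ℝ)) ≤ m.factorial * R ^ i := by
  intro i
  induction i with
  | zero => intro _; simp
  | succ i ih =>
    intro h
    have hi : (m : ℝ) + i ≤ R := by push_cast at h ⊢; linarith
    have hR : (0 : ℝ) ≤ R := le_trans (by positivity) hi
    have hfac : (((m + (i + 1)).factorial : ℝ))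
        = ((m + i + 1 : ℕ) : ℝ) * ((m + i).factorial : ℝ) := by
      rw [show m + (i + 1) = (m + i) + 1 by ring, Nat.factorial_succ]
      push_cast; ring
    rw [hfac]
    have h1 : ((m + i + 1 : ℕ) : ℝ) ≤ R := by push_cast at h ⊢; linarith
    calc ((m + i + 1 : ℕ) : ℝ) * ((m + i).factorial : ℝ)
        ≤ R * (m.factorial * R ^ i) := by
          apply mul_le_mul h1 (ih hi) (by positivity) hR
      _ = m.factorial * R ^ (i + 1) := by ring
lemma fact_down (k : ℕ) (c : ℝ) (hc0 : 0 ≤ c) (hck : c ≤ (k : ℝ) + 1) :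
    ∀ d : ℕ, (k.factorial : ℝ) * c ^ d ≤ (((k + d).factorial : ℝ)) := by
  intro d
  induction d with
  | zero => simp
  | succ d ih =>
    have hfac : (((k + (d + 1)).factorial : ℝ))
        = ((k + d + 1 : ℕ) : ℝ) * ((k + d).factorial : ℝ) := by
      rw [show k + (d + 1) = (k + d) + 1 by ring, Nat.factorial_succ]
      push_cast; ring
    rw [hfac]
    calc (k.factorial : ℝ) * c ^ (d + 1) = c * ((k.factorial : ℝ) * c ^ d) := by ring
      _ ≤ ((k + d + 1 : ℕ) : ℝ) * ((k + d).factorial : ℝ) := by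
          apply mul_le_mul _ ih (by positivity) (by positivity)
          push_cast; linarith

lemma Pois_ratio_up {t : ℝ} (ht : 0 < t) (m i L : ℕ) (hm : (m : ℝ) ≤ t) (hiL : i ≤ L)
    (hL : ((L : ℝ)) ^ 2 ≤ t) :
    Real.exp (-4) * Pois t m ≤ Pois t (m + i) := by
  have hbase : t + L ≤ t * Real.exp ((L : ℝ) / t) := by
    have h1 : (L : ℝ) / t + 1 ≤ Real.exp ((L : ℝ) / t) := Real.add_one_le_exp _
    have := mul_le_mul_of_nonneg_left h1 ht.le
    calc t + (L : ℝ) = t * ((L : ℝ) / t + 1) := by field_simp; ring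
      _ ≤ t * Real.exp ((L : ℝ) / t) := this
  have hexp : Real.exp ((L : ℝ) / t) ^ i ≤ Real.exp 4 := by
    rw [← Real.exp_nat_mul]
    apply Real.exp_le_exp.2
    have h1 : (i : ℝ) * ((L : ℝ) / t) ≤ (L : ℝ) * ((L : ℝ) / t) := by
      apply mul_le_mul_of_nonneg_right (by exact_mod_cast hiL) (by positivity)
    have h2 : (L : ℝ) * ((L : ℝ) / t) ≤ 1 := by
      rw [mul_div_assoc', div_le_one ht]; nlinarith
    linarith
  have hpow : (t + (L : ℝ)) ^ i ≤ t ^ i * Real.exp 4 := by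
    calc (t + (L : ℝ)) ^ i ≤ (t * Real.exp ((L : ℝ) / t)) ^ i := by
          apply pow_le_pow_left₀ (by positivity) hbase
      _ = t ^ i * Real.exp ((L : ℝ) / t) ^ i := by rw [mul_pow]
      _ ≤ t ^ i * Real.exp 4 := by
          apply mul_le_mul_of_nonneg_left hexp (by positivity)
  have hfac : (((m + i).factorial : ℝ)) ≤ m.factorial * (t ^ i * Real.exp 4) := by
    calc (((m + i).factorial : ℝ)) ≤ m.factorial * (t + (L : ℝ)) ^ i := by
          apply fact_up m (t + L) i (by push_cast; linarith [hiL, hm,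
            (by exact_mod_cast Nat.cast_le.2 hiL : (i:ℝ) ≤ L)])
      _ ≤ m.factorial * (t ^ i * Real.exp 4) := by
          apply mul_le_mul_of_nonneg_left hpow (by positivity)
  unfold Pois
  rw [pow_add]
  have hd : t ^ m * t ^ i / ((m + i).factorial : ℝ)
      ≥ t ^ m * t ^ i / (m.factorial * (t ^ i * Real.exp 4)) := by
    apply div_le_div_of_nonneg_left (by positivity) _ hfac
    positivity
  calc Real.exp (-4) * (Real.exp (-t) * (t ^ m / m.factorial))
      = Real.exp (-t) * (t ^ m * t ^ i / (m.factorial * (t ^ i * Real.exp 4))) := by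
        rw [Real.exp_neg]
        field_simp
    _ ≤ Real.exp (-t) * (t ^ m * t ^ i / ((m + i).factorial : ℝ)) := by
        apply mul_le_mul_of_nonneg_left hd (Real.exp_pos _).le

lemma Pois_ratio_down {t : ℝ} (ht : 0 < t) (k d L : ℕ) (hk : t ≤ (k : ℝ) + d)
    (hdL : d ≤ L) (hL : ((L : ℝ)) ^ 2 ≤ t) (hhalf : 2 * (L : ℝ) ≤ t)
    (hkL : t - (L : ℝ) ≤ (k : ℝ) + 1) :
    Real.exp (-4) * Pois t (k + d) ≤ Pois t k := by
  have hLt : (0:ℝ) ≤ L := Nat.cast_nonneg L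
  have hc0 : (0:ℝ) ≤ t - L := by linarith
  have hbase : t ≤ Real.exp (2 * (L : ℝ) / t) * (t - L) := by
    have h1 : 2 * (L : ℝ) / t + 1 ≤ Real.exp (2 * (L : ℝ) / t) := Real.add_one_le_exp _
    have h2 : (2 * (L : ℝ) / t + 1) * (t - L) ≤ Real.exp (2 * (L : ℝ) / t) * (t - L) :=
      mul_le_mul_of_nonneg_right h1 hc0
    have h3 : t ≤ (2 * (L : ℝ) / t + 1) * (t - L) := by
      have hLL : (L:ℝ) * (2 * L) ≤ (L:ℝ) * t := by
        rcases eq_or_lt_of_le hLt with h | h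
        · rw [← h]; simp
        · nlinarith
      have expand : (2 * (L : ℝ) / t + 1) * (t - L) = t + L - 2 * (L:ℝ) * L / t := by
        field_simp; ring
      rw [expand]
      have : 2 * (L:ℝ) * L / t ≤ L := by
        rw [div_le_iff₀ ht]; nlinarith
      linarith
    linarith
  have hexp : Real.exp (2 * (L : ℝ) / t) ^ d ≤ Real.exp 4 := by
    rw [← Real.exp_nat_mul]
    apply Real.exp_le_exp.2
    have h1 : (d : ℝ) * (2 * (L : ℝ) / t) ≤ (L : ℝ) * (2 * (L : ℝ) / t) :=
      mul_le_mul_of_nonneg_right (by exact_mod_cast hdL) (by positivity)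
    have h2 : (L : ℝ) * (2 * (L : ℝ) / t) ≤ 2 := by
      rw [show (L:ℝ) * (2 * (L:ℝ) / t) = 2 * ((L:ℝ)*(L:ℝ)) / t by ring, div_le_iff₀ ht]
      nlinarith
    linarith
  have hpow : t ^ d ≤ Real.exp 4 * (t - L) ^ d := by
    calc t ^ d ≤ (Real.exp (2 * (L : ℝ) / t) * (t - L)) ^ d := by
          apply pow_le_pow_left₀ ht.le hbase
      _ = Real.exp (2 * (L : ℝ) / t) ^ d * (t - L) ^ d := by rw [mul_pow]
      _ ≤ Real.exp 4 * (t - L) ^ d := by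
          apply mul_le_mul_of_nonneg_right hexp (by positivity)
  have hck : t - (L:ℝ) ≤ (k : ℝ) + 1 := hkL
  have hfac := fact_down k (t - L) hc0 hck d
  -- Pois t (k+d) = e^{-t} t^{k+d}/(k+d)! ≤ e^{-t} t^{k+d} / (k! (t-L)^d)
  unfold Pois
  rw [pow_add]
  rcases eq_or_lt_of_le hc0 with hzero | hpos
  · -- t = L, then from 2L ≤ t: L = 0, so t = 0 contradiction with 0 < t... 2L ≤ t = L ⇒ L ≤ 0
    exfalso
    have : (L:ℝ) = t := by linarith
    nlinarith
  · have hd : t ^ k * t ^ d / (((k + d).factorial : ℝ))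
        ≤ t ^ k * t ^ d / ((k.factorial : ℝ) * (t - L) ^ d) := by
      apply div_le_div_of_nonneg_left (by positivity) (by positivity) hfac
    have key : Real.exp (-4) * (t ^ k * t ^ d / ((k.factorial : ℝ) * (t - L) ^ d))
        ≤ t ^ k / (k.factorial : ℝ) := by
      have h1 : t ^ k * t ^ d / ((k.factorial : ℝ) * (t - L) ^ d)
          ≤ t ^ k * (Real.exp 4 * (t - L) ^ d) / ((k.factorial : ℝ) * (t - L) ^ d) := by
        apply div_le_div_of_nonneg_right _ (by positivity)
        exact mul_le_mul_of_nonneg_left hpow (by positivity)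
      have h2 : Real.exp (-4) * (t ^ k * (Real.exp 4 * (t - L) ^ d) / ((k.factorial : ℝ) * (t - L) ^ d))
          = t ^ k / (k.factorial : ℝ) := by
        rw [Real.exp_neg]
        have hne : ((t : ℝ) - L) ^ d ≠ 0 := by positivity
        have hke : ((k.factorial : ℝ)) ≠ 0 := by positivity
        field_simp
      calc Real.exp (-4) * (t ^ k * t ^ d / ((k.factorial : ℝ) * (t - L) ^ d))
          ≤ Real.exp (-4) * (t ^ k * (Real.exp 4 * (t - L) ^ d) / ((k.factorial : ℝ) * (t - L) ^ d)) :=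
            mul_le_mul_of_nonneg_left h1 (Real.exp_pos _).le
        _ = t ^ k / (k.factorial : ℝ) := h2
    calc Real.exp (-4) * (Real.exp (-t) * (t ^ k * t ^ d / ((k + d).factorial : ℝ)))
        ≤ Real.exp (-t) * (Real.exp (-4) * (t ^ k * t ^ d / ((k.factorial : ℝ) * (t - L) ^ d))) := by
          rw [show Real.exp (-4) * (Real.exp (-t) * (t ^ k * t ^ d / ((k + d).factorial : ℝ)))
            = Real.exp (-t) * (Real.exp (-4) * (t ^ k * t ^ d / ((k + d).factorial : ℝ))) by ring]
          apply mul_le_mul_of_nonneg_left _ (Real.exp_pos _).le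
          apply mul_le_mul_of_nonneg_left hd (Real.exp_pos _).le
      _ ≤ Real.exp (-t) * (t ^ k / k.factorial) := by
          apply mul_le_mul_of_nonneg_left key (Real.exp_pos _).le

lemma exp_four_le : Real.exp 4 ≤ 55 := by
  have h := Real.exp_one_lt_d9
  have h4 : Real.exp 4 = Real.exp 1 ^ 4 := by
    rw [← Real.exp_nat_mul]; norm_num
  rw [h4]
  have h2 := pow_le_pow_left₀ (Real.exp_pos 1).le h.le 4
  calc Real.exp 1 ^ 4 ≤ (2.7182818286 : ℝ) ^ 4 := h2
    _ ≤ 55 := by norm_num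

lemma Pois_card_bound {t : ℝ} (ht : 0 < t) (m : ℕ) (L : ℕ) (hL1 : 1 ≤ L)
    (S : Finset ℕ) (hcard : S.card = L)
    (hS : ∀ k ∈ S, Real.exp (-4) * Pois t m ≤ Pois t k) :
    Pois t m ≤ Real.exp 4 / L := by
  have hsum : S.card • (Real.exp (-4) * Pois t m) ≤ ∑ k ∈ S, Pois t k :=
    Finset.card_nsmul_le_sum S _ _ hS
  have htsum : ∑ k ∈ S, Pois t k ≤ 1 := by
    rw [← Pois_tsum t]
    exact Summable.sum_le_tsum S (fun k _ => Pois_nonneg ht.le k) (Pois_summable t)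
  rw [hcard, nsmul_eq_mul] at hsum
  have hLpos : (0:ℝ) < L := by exact_mod_cast hL1
  have h1 : Real.exp (-4) * Pois t m ≤ 1 / L := by
    rw [le_div_iff₀ hLpos]
    calc Real.exp (-4) * Pois t m * L = (L : ℝ) * (Real.exp (-4) * Pois t m) := by ring
      _ ≤ 1 := le_trans hsum htsum
  calc Pois t m = Real.exp 4 * (Real.exp (-4) * Pois t m) := by
        rw [← mul_assoc, ← Real.exp_add]; norm_num
    _ ≤ Real.exp 4 * (1 / L) := mul_le_mul_of_nonneg_left h1 (Real.exp_pos _).le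
    _ = Real.exp 4 / L := by ring

lemma Pois_bound {t : ℝ} (ht : 0 < t) (m : ℕ) : Pois t m ≤ 100 / Real.sqrt t := by
  have hst : 0 < Real.sqrt t := Real.sqrt_pos.2 ht
  rcases le_or_gt t 16 with h16 | h16
  · have hs4 : Real.sqrt t ≤ 4 := by
      calc Real.sqrt t ≤ Real.sqrt 16 := Real.sqrt_le_sqrt h16
        _ = 4 := by
          rw [show (16:ℝ) = 4 ^ 2 by norm_num, Real.sqrt_sq (by norm_num)]
    calc Pois t m ≤ 1 := Pois_le_one ht.le m
      _ ≤ 100 / Real.sqrt t := by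
        rw [le_div_iff₀ hst]; linarith
  · -- t > 16
    have hs4 : 4 ≤ Real.sqrt t := by
      rw [show (4:ℝ) = Real.sqrt 16 by
        rw [show (16:ℝ) = 4 ^ 2 by norm_num, Real.sqrt_sq (by norm_num)]]
      exact Real.sqrt_le_sqrt h16.le
    set L := ⌊Real.sqrt t⌋₊ with hLdef
    have hLle : (L : ℝ) ≤ Real.sqrt t := Nat.floor_le hst.le
    have hLgt : Real.sqrt t - 1 < L := by
      have := Nat.lt_floor_add_one (Real.sqrt t)
      linarith
    have hL4 : 4 ≤ L := Nat.le_floor (by exact_mod_cast hs4)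
    have hL1 : 1 ≤ L := le_trans (by norm_num) hL4
    have hLsq : ((L:ℝ)) ^ 2 ≤ t := by
      calc ((L:ℝ)) ^ 2 ≤ Real.sqrt t ^ 2 := pow_le_pow_left₀ (Nat.cast_nonneg L) hLle 2
        _ = t := Real.sq_sqrt ht.le
    have hsq_t : Real.sqrt t * Real.sqrt t = t := Real.mul_self_sqrt ht.le
    have hs_le : Real.sqrt t ≤ t / 4 := by nlinarith
    have hhalf : 2 * (L : ℝ) ≤ t := by nlinarith
    have key : Pois t m ≤ Real.exp 4 / L := by
      rcases le_or_gt (m : ℝ) t with hm | hm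
      · -- use S = image (m + ·) (range L)
        apply Pois_card_bound ht m L hL1 ((Finset.range L).image (fun i => m + i))
        · rw [Finset.card_image_of_injective _ (add_right_injective m), Finset.card_range]
        · intro k hk
          obtain ⟨i, hi, rfl⟩ := Finset.mem_image.1 hk
          exact Pois_ratio_up ht m i L hm (le_of_lt (Finset.mem_range.1 hi)) hLsq
      · -- m > t; use S = image (m - ·) (range L)
        have hmL : L ≤ m := by
          have : (L:ℝ) ≤ m := by nlinarith
          exact_mod_cast this
        apply Pois_card_bound ht m L hL1 ((Finset.range L).image (fun i => m - i))
        · rw [Finset.card_image_of_injOn, Finset.card_range]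
          intro i hi j hj hij
          simp only [Finset.coe_range, Set.mem_Iio] at hi hj
          have hij' : m - i = m - j := hij
          omega
        · intro k hk
          obtain ⟨i, hi, rfl⟩ := Finset.mem_image.1 hk
          have hiL : i < L := Finset.mem_range.1 hi
          have hmi : m - i + i = m := by omega
          have := Pois_ratio_down ht (m - i) i L
            (by rw [show ((m - i : ℕ) : ℝ) + i = ((m - i + i : ℕ) : ℝ) by push_cast; ring, hmi]
                exact hm.le)
            hiL.le hLsq hhalf
            (by have : ((m - i : ℕ) : ℝ) ≥ (m : ℝ) - L := by
                  push_cast [Nat.cast_sub (le_of_lt (lt_of_lt_of_le hiL hmL))]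
                  linarith [show (i:ℝ) ≤ L from by exact_mod_cast hiL.le]
                nlinarith [hLle])
          rw [hmi] at this
          exact this
    calc Pois t m ≤ Real.exp 4 / L := key
      _ ≤ 100 / Real.sqrt t := by
        rw [div_le_div_iff₀ (by exact_mod_cast hL1) hst]
        have h55 : Real.exp 4 ≤ 55 := exp_four_le
        nlinarith [hLgt, hs4, Real.exp_pos 4]

lemma heatKernel_le {t : ℝ} (ht : 0 < t) (n : ℤ) :
    heatKernel t n ≤ 100 / Real.sqrt t := by
  rw [heatKernel_eq]
  have hb : ∀ m : ℕ, Pois t m * Pois t (m + n.natAbs) ≤ Pois t m * (100 / Real.sqrt t) :=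
    fun m => mul_le_mul_of_nonneg_left (Pois_bound ht _) (Pois_nonneg ht.le m)
  calc ∑' m : ℕ, Pois t m * Pois t (m + n.natAbs)
      ≤ ∑' m : ℕ, Pois t m * (100 / Real.sqrt t) := by
        apply Summable.tsum_le_tsum hb (Pois_mul_summable ht.le n.natAbs)
        exact (Pois_summable t).mul_right _
    _ = 100 / Real.sqrt t := by rw [tsum_mul_right, Pois_tsum, one_mul]

-- translation invariance of tsum over ℤ
lemma tsum_translate (g : ℤ → ℝ≥0∞) (j : ℤ) : ∑' n : ℤ, g (n - j) = ∑' n : ℤ, g n :=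
  (Equiv.subRight j).tsum_eq g

-- Hölder for tsums on ℤ in ℝ≥0∞
lemma tsum_mul_le_Lp_mul_Lq (g h : ℤ → ℝ≥0∞) {s u : ℝ} (hsu : s.HolderConjugate u) :
    ∑' i : ℤ, g i * h i ≤ (∑' i : ℤ, g i ^ s) ^ (1 / s) * (∑' i : ℤ, h i ^ u) ^ (1 / u) := by
  have := ENNReal.lintegral_mul_le_Lp_mul_Lq (Measure.count : Measure ℤ) hsu
    (measurable_from_top (f := g)).aemeasurable (measurable_from_top (f := h)).aemeasurable
  simpa [lintegral_count] using this

lemma tsum_sub_left (g : ℤ → ℝ≥0∞) (n : ℤ) : ∑' j : ℤ, g (n - j) = ∑' j : ℤ, g j :=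
  (Equiv.subLeft n).tsum_eq g

section Young
variable (κ F : ℤ → ℝ≥0∞) (A : ℝ≥0∞)

lemma kappa_ne_top (hκ1 : ∑' i, κ i = 1) (i : ℤ) : κ i ≠ ⊤ := by
  intro h
  have := ENNReal.le_tsum (f := κ) i
  rw [hκ1, h] at this
  simp at this

/-- B1: ℓq → ℓq bound with L¹-normalized kernel. -/
lemma conv_lq_le (hκ1 : ∑' i, κ i = 1) {qr : ℝ} (h1q : 1 ≤ qr) :
    (∑' n : ℤ, (∑' j : ℤ, κ (n - j) * F j) ^ qr) ≤ ∑' j : ℤ, F j ^ qr := by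
  have hq0 : (0:ℝ) < qr := lt_of_lt_of_le one_pos h1q
  rcases eq_or_lt_of_le h1q with hq1 | hq1
  · -- qr = 1
    subst hq1
    simp only [ENNReal.rpow_one]
    rw [ENNReal.tsum_comm]
    apply le_of_eq
    calc ∑' (j : ℤ) (n : ℤ), κ (n - j) * F j
        = ∑' j : ℤ, (∑' n : ℤ, κ (n - j)) * F j := by
          refine tsum_congr fun j => ?_
          rw [ENNReal.tsum_mul_right]
      _ = ∑' j : ℤ, F j := by
          refine tsum_congr fun j => ?_
          rw [tsum_translate κ j, hκ1, one_mul]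
  · -- qr > 1
    have hconj : qr.HolderConjugate (qr / (qr - 1)) := Real.HolderConjugate.conjExponent hq1
    have hconj' : (qr / (qr - 1)).HolderConjugate qr := hconj.symm
    set u := qr / (qr - 1) with hu
    have hu1 : 1 < u := hconj'.lt
    have hu0 : (0:ℝ) < u := lt_trans one_pos hu1
    have pointwise : ∀ n : ℤ, (∑' j : ℤ, κ (n - j) * F j) ^ qr
        ≤ ∑' j : ℤ, κ (n - j) * F j ^ qr := by
      intro n
      have split : ∀ j : ℤ, κ (n - j) * F j
          = κ (n - j) ^ (1/u) * (κ (n - j) ^ (1/qr) * F j) := by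
        intro j
        rcases eq_or_ne (κ (n - j)) 0 with h0 | h0
        · rw [h0, zero_mul, ENNReal.zero_rpow_of_pos (by positivity : (0:ℝ) < 1/u), zero_mul]
        · rw [← mul_assoc, ← ENNReal.rpow_add _ _ h0 (kappa_ne_top κ hκ1 _)]
          rw [show 1/u + 1/qr = 1 by
            rw [one_div, one_div]; exact hconj'.inv_add_inv_eq_one, ENNReal.rpow_one]
      have hold := tsum_mul_le_Lp_mul_Lq (fun j => κ (n - j) ^ (1/u))
        (fun j => κ (n - j) ^ (1/qr) * F j) hconj'
      have e1 : ∑' j : ℤ, (κ (n - j) ^ (1/u)) ^ u = 1 := by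
        have : ∀ j : ℤ, (κ (n - j) ^ (1/u)) ^ u = κ (n - j) := by
          intro j
          rw [← ENNReal.rpow_mul, one_div, inv_mul_cancel₀ (ne_of_gt hu0), ENNReal.rpow_one]
        rw [tsum_congr this, tsum_sub_left κ n, hκ1]
      have e2 : ∀ j : ℤ, (κ (n - j) ^ (1/qr) * F j) ^ qr = κ (n - j) * F j ^ qr := by
        intro j
        rw [ENNReal.mul_rpow_of_nonneg _ _ hq0.le, ← ENNReal.rpow_mul,
          one_div, inv_mul_cancel₀ (ne_of_gt hq0), ENNReal.rpow_one]
      calc (∑' j : ℤ, κ (n - j) * F j) ^ qr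
          = (∑' j : ℤ, κ (n - j) ^ (1/u) * (κ (n - j) ^ (1/qr) * F j)) ^ qr := by
            rw [tsum_congr split]
        _ ≤ ((∑' j : ℤ, (κ (n - j) ^ (1/u)) ^ u) ^ (1/u)
              * (∑' j : ℤ, (κ (n - j) ^ (1/qr) * F j) ^ qr) ^ (1/qr)) ^ qr := by
            exact ENNReal.rpow_le_rpow hold hq0.le
        _ = (∑' j : ℤ, κ (n - j) * F j ^ qr) := by
            rw [e1, tsum_congr e2]
            rw [ENNReal.one_rpow, one_mul, ← ENNReal.rpow_mul,
              one_div, inv_mul_cancel₀ (ne_of_gt hq0), ENNReal.rpow_one]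
    calc ∑' n : ℤ, (∑' j : ℤ, κ (n - j) * F j) ^ qr
        ≤ ∑' (n : ℤ) (j : ℤ), κ (n - j) * F j ^ qr := Summable.tsum_le_tsum pointwise
          ENNReal.summable ENNReal.summable
      _ = ∑' j : ℤ, F j ^ qr := by
          rw [ENNReal.tsum_comm]
          refine tsum_congr fun j => ?_
          rw [ENNReal.tsum_mul_right, tsum_translate κ j, hκ1, one_mul]

/-- B2: sup bound on the convolution. -/
lemma conv_sup_le (hκ1 : ∑' i, κ i = 1) (hκA : ∀ i, κ i ≤ A) {qr : ℝ} (h1q : 1 ≤ qr) (n : ℤ) :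
    (∑' j : ℤ, κ (n - j) * F j) ≤ A ^ (1/qr) * (∑' j : ℤ, F j ^ qr) ^ (1/qr) := by
  have hq0 : (0:ℝ) < qr := lt_of_lt_of_le one_pos h1q
  rcases eq_or_lt_of_le h1q with hq1 | hq1
  · subst hq1
    simp only [one_div, inv_one, ENNReal.rpow_one]
    calc ∑' j : ℤ, κ (n - j) * F j ≤ ∑' j : ℤ, A * F j := by
          apply Summable.tsum_le_tsum (fun j => mul_le_mul_left (hκA _) _)
            ENNReal.summable ENNReal.summable
      _ = A * ∑' j : ℤ, F j := ENNReal.tsum_mul_left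
  · have hconj : qr.HolderConjugate (qr / (qr - 1)) := Real.HolderConjugate.conjExponent hq1
    have hconj' : (qr / (qr - 1)).HolderConjugate qr := hconj.symm
    set u := qr / (qr - 1) with hu
    have hu1 : 1 < u := hconj'.lt
    have hu0 : (0:ℝ) < u := lt_trans one_pos hu1
    have hold := tsum_mul_le_Lp_mul_Lq (fun j => κ (n - j)) F hconj'
    have hKu : ∑' j : ℤ, κ (n - j) ^ u ≤ A ^ (u - 1) := by
      have pt : ∀ j : ℤ, κ (n - j) ^ u ≤ A ^ (u - 1) * κ (n - j) := by
        intro j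
        rcases eq_or_ne (κ (n - j)) 0 with h0 | h0
        · rw [h0, ENNReal.zero_rpow_of_pos hu0]; simp
        · have hsplit : κ (n - j) ^ u = κ (n - j) ^ (u - 1) * κ (n - j) := by
            have h1 : κ (n - j) ^ (u - 1) * κ (n - j) ^ (1:ℝ)
                = κ (n - j) ^ ((u - 1) + 1) :=
              (ENNReal.rpow_add _ _ h0 (kappa_ne_top κ hκ1 _)).symm
            rw [ENNReal.rpow_one] at h1
            rw [h1]
            norm_num
          rw [hsplit]
          exact mul_le_mul_left (ENNReal.rpow_le_rpow (hκA _) (by linarith)) _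
      calc ∑' j : ℤ, κ (n - j) ^ u ≤ ∑' j : ℤ, A ^ (u - 1) * κ (n - j) :=
            Summable.tsum_le_tsum pt ENNReal.summable ENNReal.summable
        _ = A ^ (u - 1) * ∑' j : ℤ, κ (n - j) := ENNReal.tsum_mul_left
        _ = A ^ (u - 1) := by rw [tsum_sub_left κ n, hκ1, mul_one]
    have hKu' : (∑' j : ℤ, κ (n - j) ^ u) ^ (1/u) ≤ A ^ (1/qr) := by
      calc (∑' j : ℤ, κ (n - j) ^ u) ^ (1/u) ≤ (A ^ (u - 1)) ^ (1/u) :=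
            ENNReal.rpow_le_rpow hKu (by positivity)
        _ = A ^ (1/qr) := by
          rw [← ENNReal.rpow_mul]
          congr 1
          have h1 : u⁻¹ + qr⁻¹ = 1 := hconj'.inv_add_inv_eq_one
          have hu' : u ≠ 0 := hu0.ne'
          rw [mul_one_div, sub_div, div_self hu', one_div, one_div]
          linarith
    calc ∑' j : ℤ, κ (n - j) * F j
        ≤ (∑' j : ℤ, κ (n - j) ^ u) ^ (1/u) * (∑' j : ℤ, F j ^ qr) ^ (1/qr) := hold
      _ ≤ A ^ (1/qr) * (∑' j : ℤ, F j ^ qr) ^ (1/qr) := mul_le_mul_left hKu' _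

end Young

lemma rpow_interp {x M : ℝ≥0∞} (hxM : x ≤ M) {qr pr : ℝ} (hq0 : 0 < qr) (hqp : qr ≤ pr) :
    x ^ pr ≤ M ^ (pr - qr) * x ^ qr := by
  have hp0 : 0 < pr := lt_of_lt_of_le hq0 hqp
  rcases eq_or_ne x 0 with h0 | h0
  · rw [h0, ENNReal.zero_rpow_of_pos hp0]; exact zero_le
  rcases eq_or_ne x ⊤ with htop | htop
  · have hM : M = ⊤ := top_le_iff.1 (htop ▸ hxM)
    rw [htop, hM, ENNReal.top_rpow_of_pos hp0, ENNReal.top_rpow_of_pos hq0]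
    rcases eq_or_lt_of_le (sub_nonneg.2 hqp) with hz | hz
    · rw [← hz, ENNReal.rpow_zero, one_mul]
    · rw [ENNReal.top_rpow_of_pos hz]; exact le_top
  · have hsplit : x ^ pr = x ^ (pr - qr) * x ^ qr := by
      rw [← ENNReal.rpow_add _ _ h0 htop]
      norm_num
    rw [hsplit]
    exact mul_le_mul_left (ENNReal.rpow_le_rpow hxM (sub_nonneg.2 hqp)) _

lemma young_finite (κ F : ℤ → ℝ≥0∞) (A : ℝ≥0∞)
    (hκ1 : ∑' i, κ i = 1) (hκA : ∀ i, κ i ≤ A)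
    {qr pr : ℝ} (h1q : 1 ≤ qr) (hqp : qr ≤ pr) :
    (∑' n : ℤ, (∑' j : ℤ, κ (n - j) * F j) ^ pr) ^ (1/pr)
      ≤ A ^ (1/qr - 1/pr) * (∑' j : ℤ, F j ^ qr) ^ (1/qr) := by
  have hq0 : (0:ℝ) < qr := lt_of_lt_of_le one_pos h1q
  have hp0 : (0:ℝ) < pr := lt_of_lt_of_le hq0 hqp
  have hA0 : A ≠ 0 := by
    intro h
    have hz : ∀ i : ℤ, κ i = 0 := fun i => le_antisymm (h ▸ hκA i) (zero_le)
    rw [tsum_congr hz] at hκ1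
    simp at hκ1
  have he : (0:ℝ) ≤ 1/qr - 1/pr := by
    have := one_div_le_one_div_of_le hq0 hqp
    linarith
  set S := ∑' j : ℤ, F j ^ qr with hS
  set Q := S ^ (1/qr) with hQ
  have hSQ : Q ^ qr = S := by
    rw [hQ, ← ENNReal.rpow_mul, one_div, inv_mul_cancel₀ hq0.ne', ENNReal.rpow_one]
  set M := A ^ (1/qr) * Q with hM
  have hconv_sup : ∀ n : ℤ, (∑' j : ℤ, κ (n - j) * F j) ≤ M :=
    fun n => conv_sup_le κ F A hκ1 hκA h1q n
  have key : ∑' n : ℤ, (∑' j : ℤ, κ (n - j) * F j) ^ pr ≤ M ^ (pr - qr) * S := by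
    calc ∑' n : ℤ, (∑' j : ℤ, κ (n - j) * F j) ^ pr
        ≤ ∑' n : ℤ, M ^ (pr - qr) * (∑' j : ℤ, κ (n - j) * F j) ^ qr :=
          Summable.tsum_le_tsum (fun n => rpow_interp (hconv_sup n) hq0 hqp)
            ENNReal.summable ENNReal.summable
      _ = M ^ (pr - qr) * ∑' n : ℤ, (∑' j : ℤ, κ (n - j) * F j) ^ qr :=
          ENNReal.tsum_mul_left
      _ ≤ M ^ (pr - qr) * S := mul_le_mul_right (conv_lq_le κ F hκ1 h1q) _
  calc (∑' n : ℤ, (∑' j : ℤ, κ (n - j) * F j) ^ pr) ^ (1/pr)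
      ≤ (M ^ (pr - qr) * S) ^ (1/pr) := ENNReal.rpow_le_rpow key (by positivity)
    _ = M ^ ((pr - qr) * (1/pr)) * S ^ (1/pr) := by
          rw [ENNReal.mul_rpow_of_nonneg _ _ (by positivity : (0:ℝ) ≤ 1/pr),
            ← ENNReal.rpow_mul]
    _ ≤ A ^ (1/qr - 1/pr) * Q := by
          have hAe : A ^ (1/qr - 1/pr) ≠ 0 := by
            rw [Ne, ENNReal.rpow_eq_zero_iff]
            rintro (⟨h, _⟩ | ⟨_, h⟩)
            · exact hA0 h
            · linarith
          rcases eq_or_ne S 0 with hS0 | hS0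
          · rw [hS0, ENNReal.zero_rpow_of_pos (by positivity : (0:ℝ) < 1/pr), mul_zero]
            exact zero_le
          rcases eq_or_ne S ⊤ with hStop | hStop
          · have hQtop : Q = ⊤ := by
              rw [hQ, hStop, ENNReal.top_rpow_of_pos (by positivity)]
            rw [hQtop, ENNReal.mul_top hAe]
            exact le_top
          · have hQ0 : Q ≠ 0 := by
              rw [hQ, Ne, ENNReal.rpow_eq_zero_iff]
              rintro (⟨h, _⟩ | ⟨h, _⟩)
              · exact hS0 h
              · exact hStop h
            have hQtop : Q ≠ ⊤ := by
              rw [hQ, Ne, ENNReal.rpow_eq_top_iff]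
              rintro (⟨h, _⟩ | ⟨h, _⟩)
              · exact hS0 h
              · exact hStop h
            have hexp : S ^ (1/pr) = Q ^ (qr * (1/pr)) := by
              rw [ENNReal.rpow_mul, hSQ]
            rw [hexp, hM]
            rw [ENNReal.mul_rpow_of_nonneg _ _
              (mul_nonneg (sub_nonneg.2 hqp) (by positivity))]
            rw [← ENNReal.rpow_mul, mul_assoc]
            have hQQ : Q ^ ((pr - qr) * (1/pr)) * Q ^ (qr * (1/pr)) = Q := by
              rw [← ENNReal.rpow_add _ _ hQ0 hQtop,
                show (pr - qr) * (1/pr) + qr * (1/pr) = 1 by field_simp; ring]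
              exact ENNReal.rpow_one Q
            rw [hQQ]
            apply mul_le_mul_left
            apply le_of_eq
            congr 1
            field_simp

lemma eLpNorm_count_eq (g : ℤ → ℝ) {P : ℝ≥0∞} (h0 : P ≠ 0) (htop : P ≠ ∞) :
    eLpNorm g P Measure.count
      = (∑' n : ℤ, (‖g n‖₊ : ℝ≥0∞) ^ P.toReal) ^ (1 / P.toReal) := by
  rw [eLpNorm_eq_lintegral_rpow_enorm_toReal h0 htop, lintegral_count]; rfl

lemma eLpNorm_top_le (g : ℤ → ℝ) (c : ℝ≥0∞) (h : ∀ n, (‖g n‖₊ : ℝ≥0∞) ≤ c) :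
    eLpNorm g ⊤ Measure.count ≤ c := by
  rw [eLpNorm_exponent_top, eLpNormEssSup]
  exact essSup_le_of_ae_le c (ae_of_all _ h)

lemma le_eLpNorm_top (g : ℤ → ℝ) (j : ℤ) :
    (‖g j‖₊ : ℝ≥0∞) ≤ eLpNorm g ⊤ Measure.count := by
  rw [eLpNorm_exponent_top, eLpNormEssSup]
  have h := ENNReal.ae_le_essSup (μ := (Measure.count : Measure ℤ))
    (fun n : ℤ => (‖g n‖₊ : ℝ≥0∞))
  rw [ae_iff] at h
  have hempty := Measure.count_eq_zero_iff.1 h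
  by_contra hcon
  have : j ∈ {x : ℤ | ¬(‖g x‖₊ : ℝ≥0∞) ≤ essSup (fun n : ℤ => (‖g n‖₊ : ℝ≥0∞)) Measure.count} :=
    hcon
  rw [hempty] at this
  exact this

lemma enorm_conv_le {t : ℝ} (ht : 0 < t) (f : ℤ → ℝ) (n : ℤ) :
    (‖∑' j : ℤ, heatKernel t (n - j) * f j‖₊ : ℝ≥0∞)
      ≤ ∑' j : ℤ, ENNReal.ofReal (heatKernel t (n - j)) * (‖f j‖₊ : ℝ≥0∞) := by
  by_cases hs : Summable (fun j : ℤ => heatKernel t (n - j) * f j)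
  · have hnorm : Summable fun j : ℤ => ‖heatKernel t (n - j) * f j‖ :=
      summable_norm_iff.2 hs
    calc (‖∑' j : ℤ, heatKernel t (n - j) * f j‖₊ : ℝ≥0∞)
        = ENNReal.ofReal ‖∑' j : ℤ, heatKernel t (n - j) * f j‖ :=
          (ofReal_norm _).symm
      _ ≤ ENNReal.ofReal (∑' j : ℤ, ‖heatKernel t (n - j) * f j‖) :=
          ENNReal.ofReal_le_ofReal (norm_tsum_le_tsum_norm hnorm)
      _ = ∑' j : ℤ, ENNReal.ofReal ‖heatKernel t (n - j) * f j‖ :=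
          ENNReal.ofReal_tsum_of_nonneg (fun _ => norm_nonneg _) hnorm
      _ = ∑' j : ℤ, ENNReal.ofReal (heatKernel t (n - j)) * (‖f j‖₊ : ℝ≥0∞) := by
          refine tsum_congr fun j => ?_
          rw [norm_mul, Real.norm_eq_abs (heatKernel t (n - j)),
            abs_of_nonneg (heatKernel_nonneg ht.le _),
            ENNReal.ofReal_mul (heatKernel_nonneg ht.le _), ofReal_norm]; rfl
  · rw [tsum_eq_zero_of_not_summable hs]
    simp

lemma A_pow_le {t : ℝ} (ht : 0 < t) {α : ℝ} (h0 : 0 ≤ α) (h1 : α ≤ 1) :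
    (ENNReal.ofReal (100 * t ^ (-(1/2) : ℝ))) ^ α
      ≤ ENNReal.ofReal (100 * t ^ (-(1/2) * α)) := by
  have hx : (0:ℝ) < 100 * t ^ (-(1/2) : ℝ) := by positivity
  rw [ENNReal.ofReal_rpow_of_pos hx]
  apply ENNReal.ofReal_le_ofReal
  rw [Real.mul_rpow (by norm_num) (Real.rpow_nonneg ht.le _), ← Real.rpow_mul ht.le]
  apply mul_le_mul_of_nonneg_right _ (Real.rpow_nonneg ht.le _)
  calc (100 : ℝ) ^ α ≤ (100 : ℝ) ^ (1:ℝ) :=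
        Real.rpow_le_rpow_of_exponent_le (by norm_num) h1
    _ = 100 := Real.rpow_one 100

/-- ℓ^p–ℓ^q smoothing estimate for `u_f(t,·) = G(t,·) * f`. -/
theorem stmt17 (p q : ℝ≥0∞) (hq : 1 ≤ q) (hqp : q ≤ p)
    (f : ℤ → ℝ) (hf : eLpNorm f q (Measure.count) < ⊤) :
    ∃ C > 0, ∀ t : ℝ, 0 < t →
      eLpNorm (fun n : ℤ => ∑' j : ℤ, heatKernel t (n - j) * f j) p Measure.count ≤
        ENNReal.ofReal (C * t ^ (-(1 / 2 : ℝ) * (1 / q.toReal - 1 / p.toReal))) *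
          eLpNorm f q Measure.count := by
  refine ⟨100, by norm_num, fun t ht => ?_⟩
  set κ := fun i : ℤ => ENNReal.ofReal (heatKernel t i) with hκ
  set F := fun j : ℤ => (‖f j‖₊ : ℝ≥0∞) with hF
  have hκ1 : ∑' i, κ i = 1 := tsum_ofReal_heatKernel ht.le
  set A : ℝ≥0∞ := ENNReal.ofReal (100 * t ^ (-(1/2) : ℝ)) with hA
  have hrw : 100 * t ^ (-(1/2) : ℝ) = 100 / Real.sqrt t := by
    rw [Real.rpow_neg ht.le, ← Real.sqrt_eq_rpow]
    ring
  have hκA : ∀ i, κ i ≤ A := fun i => by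
    rw [hκ, hA, hrw]
    exact ENNReal.ofReal_le_ofReal (heatKernel_le ht i)
  have hconv : ∀ n : ℤ,
      (‖∑' j : ℤ, heatKernel t (n - j) * f j‖₊ : ℝ≥0∞) ≤ ∑' j : ℤ, κ (n - j) * F j :=
    fun n => enorm_conv_le ht f n
  rcases eq_or_ne q ⊤ with hqtop | hqtop
  · -- q = ⊤, hence p = ⊤
    have hptop : p = ⊤ := top_le_iff.1 (hqtop ▸ hqp)
    subst hqtop hptop
    have hbound : ∀ n : ℤ, (‖∑' j : ℤ, heatKernel t (n - j) * f j‖₊ : ℝ≥0∞)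
        ≤ eLpNorm f ⊤ Measure.count := by
      intro n
      refine le_trans (hconv n) ?_
      calc ∑' j : ℤ, κ (n - j) * F j
          ≤ ∑' j : ℤ, κ (n - j) * eLpNorm f ⊤ Measure.count :=
            Summable.tsum_le_tsum (fun j => mul_le_mul_right (le_eLpNorm_top f j) _)
              ENNReal.summable ENNReal.summable
        _ = (∑' j : ℤ, κ (n - j)) * eLpNorm f ⊤ Measure.count := ENNReal.tsum_mul_right
        _ = eLpNorm f ⊤ Measure.count := by rw [tsum_sub_left κ n, hκ1, one_mul]
    have h1 : eLpNorm (fun n : ℤ => ∑' j : ℤ, heatKernel t (n - j) * f j) ⊤ Measure.count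
        ≤ eLpNorm f ⊤ Measure.count := eLpNorm_top_le _ _ hbound
    have hconst : (1 : ℝ≥0∞) ≤ ENNReal.ofReal
        (100 * t ^ (-(1 / 2 : ℝ) * (1 / (⊤ : ℝ≥0∞).toReal - 1 / (⊤ : ℝ≥0∞).toReal))) := by
      simp only [ENNReal.toReal_top, div_zero, sub_self, mul_zero, Real.rpow_zero, mul_one]
      exact ENNReal.one_le_ofReal.2 (by norm_num)
    calc eLpNorm (fun n : ℤ => ∑' j : ℤ, heatKernel t (n - j) * f j) ⊤ Measure.count
        ≤ eLpNorm f ⊤ Measure.count := h1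
      _ ≤ ENNReal.ofReal
            (100 * t ^ (-(1 / 2 : ℝ) * (1 / (⊤ : ℝ≥0∞).toReal - 1 / (⊤ : ℝ≥0∞).toReal))) *
            eLpNorm f ⊤ Measure.count := le_mul_of_one_le_left (zero_le) hconst
  · -- q finite
    have hq0 : q ≠ 0 := by
      intro h; rw [h] at hq; exact absurd hq (by simp)
    set qr := q.toReal with hqr
    have h1q : (1:ℝ) ≤ qr := by
      have := ENNReal.toReal_mono hqtop hq
      simpa using this
    have hq0r : (0:ℝ) < qr := lt_of_lt_of_le one_pos h1q
    have hQeq : eLpNorm f q Measure.count = (∑' j : ℤ, F j ^ qr) ^ (1/qr) :=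
      eLpNorm_count_eq f hq0 hqtop
    rcases eq_or_ne p ⊤ with hptop | hptop
    · subst hptop
      have hα0 : (0:ℝ) ≤ 1/qr - 1/(⊤ : ℝ≥0∞).toReal := by
        simp only [ENNReal.toReal_top, div_zero, sub_zero]
        positivity
      have hα1 : 1/qr - 1/(⊤ : ℝ≥0∞).toReal ≤ 1 := by
        simp only [ENNReal.toReal_top, div_zero, sub_zero]
        rw [div_le_one hq0r]; exact h1q
      have hbound : ∀ n : ℤ, (‖∑' j : ℤ, heatKernel t (n - j) * f j‖₊ : ℝ≥0∞)
          ≤ A ^ (1/qr) * eLpNorm f q Measure.count := by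
        intro n
        rw [hQeq]
        exact le_trans (hconv n) (conv_sup_le κ F A hκ1 hκA h1q n)
      calc eLpNorm (fun n : ℤ => ∑' j : ℤ, heatKernel t (n - j) * f j) ⊤ Measure.count
          ≤ A ^ (1/qr) * eLpNorm f q Measure.count := eLpNorm_top_le _ _ hbound
        _ ≤ ENNReal.ofReal
              (100 * t ^ (-(1 / 2 : ℝ) * (1 / qr - 1 / (⊤ : ℝ≥0∞).toReal))) *
              eLpNorm f q Measure.count := by
            apply mul_le_mul_left
            have := A_pow_le ht hα0 hα1
            simp only [ENNReal.toReal_top, div_zero, sub_zero] at this ⊢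
            exact this
    · -- both finite
      have hp0 : p ≠ 0 := fun h => hq0 (le_antisymm (h ▸ hqp) zero_le)
      set pr := p.toReal with hpr
      have hqpr : qr ≤ pr := ENNReal.toReal_mono hptop hqp
      have hp0r : (0:ℝ) < pr := lt_of_lt_of_le hq0r hqpr
      have hα0 : (0:ℝ) ≤ 1/qr - 1/pr := by
        have := one_div_le_one_div_of_le hq0r hqpr
        linarith
      have hα1 : 1/qr - 1/pr ≤ 1 := by
        have h2 : 1/qr ≤ 1 := by rw [div_le_one hq0r]; exact h1q
        have h3 : (0:ℝ) ≤ 1/pr := by positivity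
        linarith
      have hPeq : eLpNorm (fun n : ℤ => ∑' j : ℤ, heatKernel t (n - j) * f j) p Measure.count
          = (∑' n : ℤ, (‖∑' j : ℤ, heatKernel t (n - j) * f j‖₊ : ℝ≥0∞) ^ pr) ^ (1/pr) :=
        eLpNorm_count_eq _ hp0 hptop
      have step1 : (∑' n : ℤ, (‖∑' j : ℤ, heatKernel t (n - j) * f j‖₊ : ℝ≥0∞) ^ pr) ^ (1/pr)
          ≤ (∑' n : ℤ, (∑' j : ℤ, κ (n - j) * F j) ^ pr) ^ (1/pr) := by
        apply ENNReal.rpow_le_rpow _ (by positivity)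
        apply Summable.tsum_le_tsum _ ENNReal.summable ENNReal.summable
        exact fun n => ENNReal.rpow_le_rpow (hconv n) hp0r.le
      calc eLpNorm (fun n : ℤ => ∑' j : ℤ, heatKernel t (n - j) * f j) p Measure.count
          = (∑' n : ℤ, (‖∑' j : ℤ, heatKernel t (n - j) * f j‖₊ : ℝ≥0∞) ^ pr) ^ (1/pr) := hPeq
        _ ≤ (∑' n : ℤ, (∑' j : ℤ, κ (n - j) * F j) ^ pr) ^ (1/pr) := step1
        _ ≤ A ^ (1/qr - 1/pr) * (∑' j : ℤ, F j ^ qr) ^ (1/qr) :=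
            young_finite κ F A hκ1 hκA h1q hqpr
        _ ≤ ENNReal.ofReal (100 * t ^ (-(1 / 2 : ℝ) * (1/qr - 1/pr))) *
              eLpNorm f q Measure.count := by
            rw [hQeq]
            exact mul_le_mul_left (A_pow_le ht hα0 hα1) _
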